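/- Let p be an odd prime, n ≥ 1, and i ≥ 1. Consider the action of the unit group (Z/p^n)^× on Z/p^n given by u • x = u^i x. The subgroup of elements fixed by every unit is: trivial if (p-1) does not divide i, and equal to the unique subgroup of order p^{min(n, v_p(i)+1)} if (p-1) divides i. -/

import Mathlib

lemma val_aux {p : ℕ} (hp : p.Prime) (hp2 : p ≠ 2) {i : ℕ} (hi : 1 ≤ i) :
    ∃ m : ℕ, (p+1)^i - 1 = p ^ (padicValNat p i + 1) * m ∧ ¬ p ∣ m := by
  haveI := Fact.mk hp
  have hodd : Odd p := hp.odd_of_ne_two hp2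
  have hp1 : 2 ≤ p := hp.two_le
  have hge : p + 1 ≤ (p+1)^i := Nat.le_self_pow (by omega) _
  have hN : (p+1)^i - 1 ≠ 0 := by omega
  have hmul : emultiplicity p ((p+1)^i - 1^i) = emultiplicity p ((p+1) - 1) + emultiplicity p i :=
    Nat.emultiplicity_pow_sub_pow hp hodd (by simp) (by intro h; have := Nat.dvd_one.mp ((Nat.dvd_add_right (dvd_refl p)).mp h); omega) i
  have hself : emultiplicity p ((p+1) - 1) = 1 := by
    simpa using (Nat.finiteMultiplicity_iff.2 ⟨hp.ne_one, hp.pos⟩).emultiplicity_self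
  have hvi : emultiplicity p i = (padicValNat p i : ℕ∞) :=
    (padicValNat_eq_emultiplicity (by omega)).symm
  rw [one_pow, hself, hvi] at hmul
  have hval : padicValNat p ((p+1)^i - 1) = padicValNat p i + 1 := by
    have h2 : (padicValNat p ((p+1)^i - 1) : ℕ∞) = ((padicValNat p i + 1 : ℕ) : ℕ∞) := by
      rw [padicValNat_eq_emultiplicity hN, hmul]
      push_cast
      ring
    exact_mod_cast h2
  have hfac : ((p+1)^i - 1).factorization p = padicValNat p i + 1 := by
    rw [Nat.factorization_def _ hp, hval]
  refine ⟨((p+1)^i - 1) / p ^ (padicValNat p i + 1), ?_, ?_⟩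
  · conv_lhs => rw [← Nat.ordProj_mul_ordCompl_eq_self ((p+1)^i - 1) p]
    rw [hfac]
  · have := Nat.not_dvd_ordCompl hp hN
    rwa [hfac] at this

/-- The subgroup of `ℤ/p^n` fixed by the action `u • x = u^i * x` of all units
`u ∈ (ℤ/p^n)ˣ`. -/
def fixedSub (p n i : ℕ) : AddSubgroup (ZMod (p ^ n)) where
  carrier := {x | ∀ u : (ZMod (p ^ n))ˣ, (u : ZMod (p ^ n)) ^ i * x = x}
  zero_mem' := by intro u; simp
  add_mem' := by intro a b ha hb u; rw [mul_add, ha u, hb u]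
  neg_mem' := by intro a ha u; rw [mul_neg, ha u]


lemma mem_fixed_iff (p n i : ℕ) (hp : p.Prime) (hp2 : p ≠ 2) (hn : 1 ≤ n) (hi : 1 ≤ i)
    (hdvd : (p - 1) ∣ i) (x : ZMod (p ^ n)) :
    x ∈ fixedSub p n i ↔ (p : ZMod (p ^ n)) ^ (min n (padicValNat p i + 1)) * x = 0 := by
  haveI : NeZero (p ^ n) := ⟨pow_ne_zero _ hp.pos.ne'⟩
  set v := min n (padicValNat p i + 1) with hv
  constructor
  · intro hx
    by_cases hveq : v = n
    · rw [hveq, ← Nat.cast_pow, ZMod.natCast_self, zero_mul]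
    · have hv0 : v = padicValNat p i + 1 := by omega
      obtain ⟨m, hm, hpm⟩ := val_aux hp hp2 hi
      have hu : Nat.Coprime (p + 1) (p ^ n) := by
        apply Nat.Coprime.pow_right
        simpa using (Nat.coprime_self_add_left (m := 1) (n := p)).mpr (Nat.one_coprime p)
      have hxu := hx (ZMod.unitOfCoprime (p + 1) hu)
      rw [ZMod.coe_unitOfCoprime] at hxu
      have h1 : (((p + 1) ^ i - 1 : ℕ) : ZMod (p ^ n)) * x = 0 := by
        rw [Nat.cast_sub (Nat.one_le_pow _ _ (by omega)), sub_mul]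
        push_cast
        push_cast at hxu
        rw [hxu]
        ring
      rw [hm] at h1
      push_cast at h1
      have hcm : Nat.Coprime m (p ^ n) :=
        Nat.Coprime.pow_right _ (Nat.Coprime.symm ((Nat.Prime.coprime_iff_not_dvd hp).mpr hpm))
      have h2 : ((ZMod.unitOfCoprime m hcm : (ZMod (p ^ n))ˣ) : ZMod (p ^ n)) *
          ((p : ZMod (p ^ n)) ^ v * x) = 0 := by
        rw [ZMod.coe_unitOfCoprime, hv0]
        linear_combination h1
      rwa [Units.mul_right_eq_zero] at h2
  · intro h u
    have hvn : v ≤ n := min_le_left _ _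
    have hv1 : 1 ≤ v := le_min hn (Nat.succ_le_succ (Nat.zero_le _))
    haveI : NeZero (p ^ v) := ⟨pow_ne_zero _ hp.pos.ne'⟩
    haveI : Fact (1 < p ^ v) := ⟨Nat.one_lt_pow (by omega) hp.one_lt⟩
    set f := ZMod.castHom (pow_dvd_pow p hvn) (ZMod (p ^ v)) with hf
    set u' := Units.map (f : ZMod (p ^ n) →* ZMod (p ^ v)) u with hu'
    -- the exponent of the unit group of `ZMod (p^v)` divides `i`
    have hcard : Nat.card (ZMod (p ^ v))ˣ = p ^ (v - 1) * (p - 1) := by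
      rw [Nat.card_eq_fintype_card, ZMod.card_units_eq_totient,
        Nat.totient_prime_pow hp (by omega)]
    have hdvd2 : p ^ (v - 1) * (p - 1) ∣ i := by
      apply Nat.Coprime.mul_dvd_of_dvd_of_dvd
      · refine Nat.Coprime.pow_left _ ?_
        show Nat.gcd p (p - 1) = 1
        rw [Nat.gcd_self_sub_right hp.one_le, Nat.gcd_one_right]
      · calc p ^ (v - 1) ∣ p ^ padicValNat p i := pow_dvd_pow p (by omega)
          _ ∣ i := pow_padicValNat_dvd
      · exact hdvd
    have hui : u' ^ i = 1 := by
      obtain ⟨k, hk⟩ := hdvd2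
      rw [hk, pow_mul, ← hcard, pow_card_eq_one', one_pow]
    -- hence `p^v` divides the value of `u^i - 1`
    have hfy : f ((u : ZMod (p ^ n)) ^ i - 1) = 0 := by
      have : (f (u : ZMod (p ^ n))) ^ i = 1 := by
        have := congrArg (Units.val) hui
        simpa [hu'] using this
      rw [map_sub, map_pow, map_one, this, sub_self]
    set y := (u : ZMod (p ^ n)) ^ i - 1 with hy
    have hyval : (p : ℕ) ^ v ∣ y.val := by
      have h1 : f ((y.val : ℕ) : ZMod (p ^ n)) = ((y.val : ℕ) : ZMod (p ^ v)) := map_natCast f _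
      rw [ZMod.natCast_rightInverse y] at h1
      rw [h1] at hfy
      exact (ZMod.natCast_eq_zero_iff _ _).mp hfy
    obtain ⟨t, ht⟩ := hyval
    have hyy : y = ((p : ZMod (p ^ n)) ^ v) * (t : ZMod (p ^ n)) := by
      have : y = ((y.val : ℕ) : ZMod (p ^ n)) := (ZMod.natCast_rightInverse y).symm
      rw [this, ht]
      push_cast
      ring
    have : y * x = 0 := by
      rw [hyy, mul_comm ((p : ZMod (p ^ n)) ^ v) _, mul_assoc, h, mul_zero]
    have h3 : (u : ZMod (p ^ n)) ^ i * x - x = 0 := by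
      rw [hy] at this
      linear_combination this
    exact sub_eq_zero.mp h3

lemma fixed_bot (p n i : ℕ) (hp : p.Prime) (hn : 1 ≤ n) (hi : 1 ≤ i)
    (hnd : ¬ (p - 1) ∣ i) : fixedSub p n i = ⊥ := by
  haveI := Fact.mk hp
  haveI : NeZero (p ^ n) := ⟨pow_ne_zero _ hp.pos.ne'⟩
  have hdp : p ∣ p ^ n := dvd_pow_self p (by omega)
  rw [eq_bot_iff]
  intro x hx
  obtain ⟨g, hg⟩ := IsCyclic.exists_generator (α := (ZMod p)ˣ)
  obtain ⟨u, hu⟩ := ZMod.unitsMap_surjective (m := p ^ n) hdp g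
  set c := ZMod.castHom hdp (ZMod p) with hc
  set y := (u : ZMod (p ^ n)) ^ i - 1 with hy
  have hgne : (g : ZMod p) ^ i - 1 ≠ 0 := by
    intro hcontra
    apply hnd
    have hgi : g ^ i = 1 := Units.ext (by
      push_cast
      rw [sub_eq_zero] at hcontra
      simpa using hcontra)
    have horder : orderOf g = p - 1 := by
      rw [orderOf_eq_card_of_forall_mem_zpowers hg, Nat.card_eq_fintype_card, ZMod.card_units]
    exact horder ▸ orderOf_dvd_of_pow_eq_one hgi
  have hcy : c y = (g : ZMod p) ^ i - 1 := by
    rw [hy, map_sub, map_pow, map_one]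
    congr 1
    have : c ((u : ZMod (p ^ n))) = ((ZMod.unitsMap hdp u : (ZMod p)ˣ) : ZMod p) := rfl
    rw [this, hu]
  have hyunit : IsUnit y := by
    have h1 : y = ((y.val : ℕ) : ZMod (p ^ n)) := (ZMod.natCast_rightInverse y).symm
    rw [h1, ZMod.isUnit_iff_coprime]
    apply Nat.Coprime.pow_right
    rw [Nat.coprime_comm, Nat.Prime.coprime_iff_not_dvd hp]
    intro hdvdv
    apply hgne
    rw [← hcy]
    calc c y = c ((y.val : ℕ) : ZMod (p ^ n)) := by rw [← h1]
      _ = ((y.val : ℕ) : ZMod p) := map_natCast c _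
      _ = 0 := (ZMod.natCast_eq_zero_iff _ _).mpr hdvdv
  have := hx u
  have hy0 : y * x = 0 := by rw [hy]; linear_combination this
  have := (IsUnit.mul_right_eq_zero hyunit).mp hy0
  simpa [AddSubgroup.mem_bot] using this

lemma fixed_eq_zmult (p n i : ℕ) (hp : p.Prime) (hp2 : p ≠ 2) (hn : 1 ≤ n) (hi : 1 ≤ i)
    (hdvd : (p - 1) ∣ i) :
    fixedSub p n i = AddSubgroup.zmultiples
      (((p ^ (n - min n (padicValNat p i + 1)) : ℕ) : ZMod (p ^ n))) := by
  haveI : NeZero (p ^ n) := ⟨pow_ne_zero _ hp.pos.ne'⟩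
  set v := min n (padicValNat p i + 1) with hv
  have hvn : v ≤ n := min_le_left _ _
  ext x
  rw [mem_fixed_iff p n i hp hp2 hn hi hdvd,
    AddSubgroup.mem_zmultiples_iff]
  constructor
  · intro h
    have h1 : ((p ^ v * x.val : ℕ) : ZMod (p ^ n)) = 0 := by
      push_cast
      rw [ZMod.natCast_rightInverse x]
      exact h
    have h2 : p ^ n ∣ p ^ v * x.val := (ZMod.natCast_eq_zero_iff _ _).mp h1
    have h3 : p ^ (n - v) ∣ x.val := by
      have h2' : p ^ v * p ^ (n - v) ∣ p ^ v * x.val := by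
        rw [← pow_add]
        have hvv : v + (n - v) = n := by omega
        rw [hvv]
        exact h2
      exact (mul_dvd_mul_iff_left (pow_ne_zero v hp.pos.ne')).mp h2'
    obtain ⟨t, ht⟩ := h3
    refine ⟨(t : ℤ), ?_⟩
    have : x = ((x.val : ℕ) : ZMod (p ^ n)) := (ZMod.natCast_rightInverse x).symm
    rw [this, ht, zsmul_eq_mul]
    push_cast
    ring
  · rintro ⟨k, rfl⟩
    have h0 : (p : ZMod (p ^ n)) ^ v * ((p ^ (n - v) : ℕ) : ZMod (p ^ n)) = 0 := by
      have h1 : ((p ^ v * p ^ (n - v) : ℕ) : ZMod (p ^ n)) = 0 := by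
        rw [ZMod.natCast_eq_zero_iff, ← pow_add]
        exact pow_dvd_pow p (by omega)
      rw [Nat.cast_mul, Nat.cast_pow] at h1
      exact h1
    rw [mul_smul_comm, h0, smul_zero]

lemma card_fixed (p n i : ℕ) (hp : p.Prime) (hp2 : p ≠ 2) (hn : 1 ≤ n) (hi : 1 ≤ i)
    (hdvd : (p - 1) ∣ i) :
    Nat.card (fixedSub p n i) = p ^ (min n (padicValNat p i + 1)) := by
  haveI : NeZero (p ^ n) := ⟨pow_ne_zero _ hp.pos.ne'⟩
  set v := min n (padicValNat p i + 1) with hv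
  have hvn : v ≤ n := min_le_left _ _
  rw [fixed_eq_zmult p n i hp hp2 hn hi hdvd, Nat.card_zmultiples,
    ZMod.addOrderOf_coe _ (pow_ne_zero n hp.pos.ne')]
  have hgcd : Nat.gcd (p ^ n) (p ^ (n - v)) = p ^ (n - v) :=
    Nat.gcd_eq_right (pow_dvd_pow p (by omega))
  rw [hgcd, Nat.pow_div (by omega) hp.pos]
  congr 1
  omega

/-- For `p` an odd prime, `n, i ≥ 1`, the subgroup of `ℤ/p^n` fixed by the action
`u • x = u^i x` of `(ℤ/p^n)ˣ` is trivial if `(p-1) ∤ i`, and is the unique subgroup of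
order `p^min(n, v_p(i)+1)` if `(p-1) ∣ i`. -/
theorem stmt12 (p n i : ℕ) (hp : p.Prime) (hp2 : p ≠ 2) (hn : 1 ≤ n) (hi : 1 ≤ i) :
    (¬ (p - 1) ∣ i → fixedSub p n i = ⊥) ∧
    ((p - 1) ∣ i →
      Nat.card (fixedSub p n i) = p ^ min n (padicValNat p i + 1) ∧
      ∀ T : AddSubgroup (ZMod (p ^ n)),
        Nat.card T = p ^ min n (padicValNat p i + 1) → T = fixedSub p n i) := by
  constructor
  · exact fun hnd => fixed_bot p n i hp hn hi hnd
  · intro hdvd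
    refine ⟨card_fixed p n i hp hp2 hn hi hdvd, ?_⟩
    intro T hT
    haveI : NeZero (p ^ n) := ⟨pow_ne_zero _ hp.pos.ne'⟩
    have hle : T ≤ fixedSub p n i := by
      intro x hxT
      rw [mem_fixed_iff p n i hp hp2 hn hi hdvd]
      have h0 : (Nat.card T) • (⟨x, hxT⟩ : T) = 0 := card_nsmul_eq_zero'
      have h1 : (Nat.card T) • x = 0 := congrArg (Subtype.val) h0
      rw [hT, nsmul_eq_mul] at h1
      push_cast at h1
      exact h1
    exact AddSubgroup.eq_of_le_of_card_ge hle
      (le_of_eq ((card_fixed p n i hp hp2 hn hi hdvd).trans hT.symm))
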